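/- Let G be a graph, D ⊆ V(G), k a positive integer, and let A be the k-important separator extension of D. Then A is q-unbreakability-tied to D for q(i) = i·(12^i + 1); that is, for every separation (L,R) of G of order i ≤ k with D ⊆ R, we have |L ∩ A| ≤ i·(12^i + 1). -/

import Mathlib

open Finset

variable {V : Type*} [Fintype V] [DecidableEq V]

/-- A separation of a graph: a pair of vertex sets covering all vertices with no edge
between the two strict sides. Its order is `(A ∩ B).card`. -/
def IsSep (G : SimpleGraph V) (A B : Finset V) : Prop :=
  A ∪ B = Finset.univ ∧
    ∀ a ∈ A, a ∉ B → ∀ b ∈ B, b ∉ A → ¬ G.Adj a b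

/-- The `k`-improved graph `G^⟨k⟩`: `x` and `y` are adjacent iff they are distinct and no
separation of `G` of order at most `k` separates them (i.e. `μ_G(x,y) > k`). -/
def ImprovedGraph (G : SimpleGraph V) (k : ℕ) : SimpleGraph V where
  Adj x y := x ≠ y ∧ ∀ A B : Finset V, IsSep G A B → (A ∩ B).card ≤ k →
    ¬ ((x ∈ A ∧ x ∉ B ∧ y ∈ B ∧ y ∉ A) ∨ (y ∈ A ∧ y ∉ B ∧ x ∈ B ∧ x ∉ A))
  symm := by
    refine ⟨?_⟩
    rintro x y ⟨hxy, h⟩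
    exact ⟨hxy.symm, fun A B hs ho hc => h A B hs ho hc.symm⟩
  loopless := ⟨fun x h => h.1 rfl⟩

/-- `S` is `(q,k)`-unbreakable in `G`: every separation of order at most `k` has at most `q`
vertices of `S` on one of its sides. -/
def UnbreakableSet (G : SimpleGraph V) (S : Finset V) (q k : ℕ) : Prop :=
  ∀ A B : Finset V, IsSep G A B → (A ∩ B).card ≤ k →
    (A ∩ S).card ≤ q ∨ (B ∩ S).card ≤ q

/-- A clique separation: both strict sides nonempty and the separator is a clique. -/
def IsCliqueSep (G : SimpleGraph V) (A B : Finset V) : Prop :=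
  IsSep G A B ∧ (A \ B).Nonempty ∧ (B \ A).Nonempty ∧ G.IsClique (↑(A ∩ B) : Set V)

/-- `y` is reachable from `x` in `G − W`. -/
def AvoidReach (G : SimpleGraph V) (W : Finset V) (x y : V) : Prop :=
  ∃ p : G.Walk x y, ∀ v ∈ p.support, v ∉ W

/-- `W` is an `X`-`Y` separator: no vertex of `Y \ W` is reachable from `X \ W` in `G − W`. -/
def IsSepSet (G : SimpleGraph V) (W X Y : Finset V) : Prop :=
  ∀ x ∈ X, ∀ y ∈ Y, ¬ AvoidReach G W x y

/-- `R_{G−W}(X \ W)`: the set of vertices reachable from `X \ W` in `G − W`. -/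
def ReachSet (G : SimpleGraph V) (W X : Finset V) : Set V :=
  {y | ∃ x ∈ X, AvoidReach G W x y}

/-- An important `X`-`Y` separator. -/
def IsImpSep (G : SimpleGraph V) (X Y W : Finset V) : Prop :=
  IsSepSet G W X Y ∧
  (∀ W' ⊆ W, W' ≠ W → ¬ IsSepSet G W' X Y) ∧
  ∀ W' : Finset V, IsSepSet G W' X Y → W'.card ≤ W.card →
    ¬ (ReachSet G W X ⊂ ReachSet G W' X)

/-- A `k`-important `X`-`Y` separator. -/
def IsKImpSep (G : SimpleGraph V) (k : ℕ) (X Y W : Finset V) : Prop :=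
  IsImpSep G X Y W ∧ W.card ≤ k ∧
  ∀ W' : Finset V, IsImpSep G X Y W' → W'.card ≤ k → W' ≠ W →
    ¬ (ReachSet G W X ⊆ ReachSet G W' X)

/-- The `k`-important separator extension of `D`. -/
def KImpExt (G : SimpleGraph V) (D : Finset V) (k : ℕ) : Set V :=
  {u | (∃ v, v ≠ u ∧ ∃ S : Finset V, IsKImpSep G k {v} D S ∧ u ∈ S) ∨
       (({u} : Finset V).card ≤ k ∧ IsSepSet G {u} {u} D ∧
        ∀ S : Finset V, IsSepSet G S {u} D → S.card ≤ k → S = {u})}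

/-- `C` is (the vertex set of) a connected component of `G − A`. -/
def IsCompAvoiding (G : SimpleGraph V) (A : Set V) (C : Set V) : Prop :=
  ∃ x, x ∉ A ∧ C = {y | ∃ p : G.Walk x y, ∀ v ∈ p.support, v ∉ A}

/-- `C` is (the vertex set of) a connected component of the induced subgraph `G[S]`. -/
def IsCompWithin (G : SimpleGraph V) (S : Set V) (C : Set V) : Prop :=
  ∃ x ∈ S, C = {y | ∃ p : G.Walk x y, ∀ v ∈ p.support, v ∈ S}

/-- The (open) neighborhood of a vertex set `C` in `G`. -/
def nbhdSet (G : SimpleGraph V) (C : Set V) : Set V :=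
  {v | v ∉ C ∧ ∃ c ∈ C, G.Adj v c}

/-- A connectivity-sensitive star decomposition of `G`, given by its central bag and its
set of leaf bags. -/
structure ConnSensStar (G : SimpleGraph V) where
  center : Finset V
  leaves : Finset (Finset V)
  cover : ∀ v : V, v ∈ center ∨ ∃ L ∈ leaves, v ∈ L
  edges : ∀ x y : V, G.Adj x y →
    (x ∈ center ∧ y ∈ center) ∨ ∃ L ∈ leaves, x ∈ L ∧ y ∈ L
  inter : ∀ L ∈ leaves, ∀ L' ∈ leaves, L ≠ L' → ∀ v ∈ L, v ∈ L' → v ∈ center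
  adh_distinct : ∀ L ∈ leaves, ∀ L' ∈ leaves, L ∩ center = L' ∩ center → L = L'
  comp_nbhd : ∀ L ∈ leaves, ∀ C : Set V,
    IsCompWithin G ((↑L : Set V) \ (↑center : Set V)) C → nbhdSet G C = ↑(L ∩ center)

/-- `(A,B)` is an `S`-stable separation of `G`. -/
def IsStableSep (G : SimpleGraph V) (S : Finset V) (A B : Finset V) : Prop :=
  IsSep G A B ∧ ∃ SL SR : Finset V, SL ∪ SR = S ∧ SL ∩ SR = ∅ ∧ SL ⊆ A ∧ SR ⊆ B ∧
    ∀ A' B' : Finset V, IsSep G A' B' → SL ⊆ A' → SR ⊆ B' → (A ∩ B).card ≤ (A' ∩ B').card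

/-- A `Λ`-boundaried graph: a graph together with an injective partial assignment of
labels to (boundary) vertices. -/
structure BGraph (Λ : Type*) (V : Type*) where
  G : SimpleGraph V
  bd : Λ → Option V
  inj : ∀ l l' v, bd l = some v → bd l' = some v → l = l'

/-- `K` (with embeddings `f₁`, `f₂`) is the gluing `H₁ ⊕ H₂` of two boundaried graphs:
vertices of equal label are identified, and an edge is present iff it is present in
(at least) one of the two graphs. -/
def IsGluing {Λ V₁ V₂ W : Type*} (H₁ : BGraph Λ V₁) (H₂ : BGraph Λ V₂)
    (K : SimpleGraph W) (f₁ : V₁ → W) (f₂ : V₂ → W) : Prop :=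
  Function.Injective f₁ ∧ Function.Injective f₂ ∧
  (∀ w : W, (∃ a, f₁ a = w) ∨ (∃ b, f₂ b = w)) ∧
  (∀ a b, f₁ a = f₂ b ↔ ∃ l, H₁.bd l = some a ∧ H₂.bd l = some b) ∧
  (∀ x y : W, K.Adj x y ↔
    (∃ a b, f₁ a = x ∧ f₁ b = y ∧ H₁.G.Adj a b) ∨
    (∃ a b, f₂ a = x ∧ f₂ b = y ∧ H₂.G.Adj a b))

/-- The weak cut signature value of the boundaried graph `H` at `(A', B')` is at most
`n − |A' ∩ B'|`: there is a separation of order at most `n` whose sides contain the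
boundary vertices labeled by `A'` and `B'`, respectively. -/
def WeakSigLE {Λ : Type*} {V : Type*} [Fintype V] [DecidableEq V]
    (H : BGraph Λ V) (A' B' : Finset Λ) (n : ℕ) : Prop :=
  ∃ A B : Finset V, IsSep H.G A B ∧
    (∀ l ∈ A', ∀ v, H.bd l = some v → v ∈ A) ∧
    (∀ l ∈ B', ∀ v, H.bd l = some v → v ∈ B) ∧ (A ∩ B).card ≤ n

/-- Two `Λ`-boundaried graphs have the same weak cut signature. -/
def SameWeakSig {Λ : Type*} [Fintype Λ] [DecidableEq Λ] {V₁ V₂ : Type*}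
    [Fintype V₁] [DecidableEq V₁] [Fintype V₂] [DecidableEq V₂]
    (H₁ : BGraph Λ V₁) (H₂ : BGraph Λ V₂) : Prop :=
  ∀ A' B' : Finset Λ, A' ∪ B' = Finset.univ →
    ∀ n : ℕ, WeakSigLE H₁ A' B' n ↔ WeakSigLE H₂ A' B' n


/-!
Write `Z = L ∩ R` and `i = |Z|`; the vertices of `Z` contribute at most `i`. A vertex
`u ∈ KImpExt G D k` of `L \ R` lies in a `k`-important `{v}`-`D` separator `S` with `v ≠ u`
(the other alternative is refuted by the separator `Z` itself). Split `Z` into the part `ZX`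
reached from `v` in `G - S`, the part `ZS = Z ∩ S`, and the rest `ZY`. Importance of `S`
gives `|S ∩ (L \ R)| < |ZY|` (exchanging `S ∩ (L \ R)` for `ZY` would enlarge the reach),
`k`-importance gives `ZX ≠ ∅` (otherwise `Z` would be a separator of size `≤ k` reaching
beyond `S`), and then every inclusion-minimal `ZX`-`ZY` separator of `G[L \ ZS]` inside
`S ∩ (L \ R)` is important and contains `u`. So `u` lies in an important `ZX`-`ZY`
separator of `G[L \ ZS]` of size `< i`. There are `3 ^ i` triples `(ZX, ZS, ZY)`, and for
each at most `4 ^ (i - 1)` such separators (branching on a vertex of a furthest minimum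
separator). Hence `|KImpExt G D k ∩ (L \ R)| ≤ 3 ^ i · 4 ^ (i - 1) · (i - 1) ≤ i · 12 ^ i`.
-/

section Reach

variable {V : Type*} {G : SimpleGraph V} {T W W' X X' Y : Finset V} {x y z : V}

/-- Inductive form of `y ∈ ReachSet G W X`, convenient for induction along walks. -/
inductive ReachAvoiding (G : SimpleGraph V) (W X : Finset V) : V → Prop
  | base {x : V} : x ∈ X → x ∉ W → ReachAvoiding G W X x
  | step {y y' : V} : ReachAvoiding G W X y → G.Adj y y' → y' ∉ W → ReachAvoiding G W X y'

namespace ReachAvoiding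

theorem notMem (h : ReachAvoiding G W X y) : y ∉ W := by
  cases h <;> assumption

theorem of_walk (p : G.Walk x y) (hp : ∀ w ∈ p.support, w ∉ W)
    (hx : ReachAvoiding G W X x) : ReachAvoiding G W X y := by
  induction p with
  | nil => exact hx
  | cons h q ih =>
    exact ih (fun w hw => hp w (List.mem_cons_of_mem _ hw))
      (hx.step h (hp _ (List.mem_cons_of_mem _ q.start_mem_support)))

theorem mem_reachSet (h : ReachAvoiding G W X y) : y ∈ ReachSet G W X := by
  induction h with
  | base hx hxW => exact ⟨_, hx, .nil, by simpa⟩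
  | step _ hadj hy ih =>
    obtain ⟨x, hx, p, hp⟩ := ih
    refine ⟨x, hx, p.concat hadj, fun w hw => ?_⟩
    rw [SimpleGraph.Walk.support_concat, List.mem_append, List.mem_singleton] at hw
    rcases hw with hw | rfl
    exacts [hp w hw, hy]

theorem anti (hW : W' ⊆ W) (h : ReachAvoiding G W X y) : ReachAvoiding G W' X y := by
  induction h with
  | base hx hxW => exact base hx fun h => hxW (hW h)
  | step _ hadj hy ih => exact ih.step hadj fun h => hy (hW h)

theorem mono (hX : X ⊆ X') (h : ReachAvoiding G W X y) : ReachAvoiding G W X' y := by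
  induction h with
  | base hx hxW => exact base (hX hx) hxW
  | step _ hadj hy ih => exact ih.step hadj hy

theorem trans (hy : ReachAvoiding G W X y) (hz : ReachAvoiding G W {y} z) :
    ReachAvoiding G W X z := by
  induction hz with
  | base hx _ => rwa [mem_singleton.mp hx]
  | step _ hadj hz ih => exact ih.step hadj hz

theorem trans_of_forall (hX : ∀ x ∈ X', x ∉ W → ReachAvoiding G W X x)
    (h : ReachAvoiding G W X' z) : ReachAvoiding G W X z := by
  induction h with
  | base hx hxW => exact hX _ hx hxW
  | step _ hadj hz ih => exact ih.step hadj hz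

theorem symm (h : ReachAvoiding G W {x} y) : ReachAvoiding G W {y} x := by
  induction h with
  | base hx hxW =>
    obtain rfl := mem_singleton.mp hx
    exact base (mem_singleton_self _) hxW
  | step h hadj hy ih =>
    exact (base (mem_singleton_self _) hy).step hadj.symm h.notMem |>.trans ih

theorem avoid_of_forall (hT : ∀ z, ReachAvoiding G W X z → z ∉ T)
    (h : ReachAvoiding G W X y) : ReachAvoiding G T X y := by
  induction h with
  | base hx hxW => exact base hx (hT _ (base hx hxW))
  | step h hadj hy ih => exact ih.step hadj (hT _ (h.step hadj hy))

theorem exists_source (h : ReachAvoiding G W X y) : ∃ x ∈ X, x ∉ W := by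
  induction h with
  | base hx hxW => exact ⟨_, hx, hxW⟩
  | step _ _ _ ih => exact ih

end ReachAvoiding

theorem reachAvoiding_iff_mem_reachSet : ReachAvoiding G W X y ↔ y ∈ ReachSet G W X :=
  ⟨ReachAvoiding.mem_reachSet, fun ⟨_, hx, p, hp⟩ =>
    .of_walk p hp (.base hx (hp _ p.start_mem_support))⟩

theorem reachSet_eq : ReachSet G W X = {y | ReachAvoiding G W X y} :=
  Set.ext fun _ => reachAvoiding_iff_mem_reachSet.symm

theorem reachSet_subset_reachSet_iff :
    ReachSet G W X ⊆ ReachSet G W' X ↔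
      ∀ z, ReachAvoiding G W X z → ReachAvoiding G W' X z := by
  simp only [reachSet_eq, Set.ofPred_subset_ofPred]

theorem isSepSet_iff : IsSepSet G W X Y ↔ ∀ y ∈ Y, ¬ ReachAvoiding G W X y := by
  simp only [IsSepSet, reachAvoiding_iff_mem_reachSet, ReachSet, Set.mem_ofPred_eq]
  exact ⟨fun h y hy ⟨x, hx, hr⟩ => h x hx y hy hr,
    fun h x hx y hy hr => h y hy ⟨x, hx, hr⟩⟩

theorem IsSepSet.not_reach (h : IsSepSet G W X Y) (hy : y ∈ Y) : ¬ ReachAvoiding G W X y :=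
  isSepSet_iff.mp h y hy

theorem IsSepSet.mono (hW : W ⊆ W') (h : IsSepSet G W X Y) : IsSepSet G W' X Y :=
  isSepSet_iff.mpr fun _ hy hr => h.not_reach hy (hr.anti hW)

theorem isSepSet_of_mem {v : V} (hv : v ∈ W) : IsSepSet G W {v} Y :=
  isSepSet_iff.mpr fun _ _ hr => by
    obtain ⟨x, hx, hxW⟩ := hr.exists_source
    exact hxW (mem_singleton.mp hx ▸ hv)

theorem IsImpSep.reach_subset_of_card_le (h : IsImpSep G X Y W) (hT : IsSepSet G T X Y)
    (hcard : T.card ≤ W.card) (hWT : ∀ z, ReachAvoiding G W X z → ReachAvoiding G T X z) :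
    ∀ z, ReachAvoiding G T X z → ReachAvoiding G W X z := by
  have := h.2.2 T hT hcard
  rw [Set.ssubset_def, not_and_not_right, reachSet_subset_reachSet_iff,
    reachSet_subset_reachSet_iff] at this
  exact this hWT

open scoped Classical in
theorem IsSepSet.exists_minimal_subset (hW : IsSepSet G W X Y) :
    ∃ W' ⊆ W, IsSepSet G W' X Y ∧
      ∀ W₂ ⊆ W', W₂ ≠ W' → ¬ IsSepSet G W₂ X Y := by
  obtain ⟨W', hW', hmin⟩ := (W.powerset.filter (IsSepSet G · X Y)).exists_min_image
    Finset.card ⟨W, by simpa using hW⟩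
  simp only [mem_filter, mem_powerset] at hW' hmin
  refine ⟨W', hW'.1, hW'.2, fun W₂ hsub hne hsep => ?_⟩
  exact (card_lt_card (Finset.ssubset_iff_subset_ne.mpr ⟨hsub, hne⟩)).not_ge
    (hmin W₂ ⟨hsub.trans hW'.1, hsep⟩)

end Reach

section InducedOn

variable {V : Type*} {G : SimpleGraph V} {s : Finset V} {x y : V}

abbrev inducedOn (G : SimpleGraph V) (s : Finset V) : SimpleGraph V :=
  (G.induce ↑s).spanningCoe

theorem inducedOn_adj : (inducedOn G s).Adj x y ↔ G.Adj x y ∧ x ∈ s ∧ y ∈ s := by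
  simp

end InducedOn

section MinimalSeparators

variable {V : Type*} [DecidableEq V] {G : SimpleGraph V} {F S T W X Y : Finset V} {v w z : V}

theorem ReachAvoiding.erase_split (h : ReachAvoiding G (S.erase w) X z) :
    ReachAvoiding G S X z ∨ ReachAvoiding G (S.erase w) {w} z := by
  induction h with
  | @base x hx hxW =>
    by_cases hxw : x = w
    · exact .inr (.base (hxw ▸ mem_singleton_self x) hxW)
    · exact .inl (.base hx fun h => hxW (mem_erase.mpr ⟨hxw, h⟩))
  | @step y y' _ hadj hy ih =>
    by_cases hyw : y' = w
    · exact .inr (.base (hyw ▸ mem_singleton_self y') hy)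
    · exact ih.imp (·.step hadj fun h => hy (mem_erase.mpr ⟨hyw, h⟩))
        (·.step hadj hy)

theorem IsSepSet.exists_reach_of_not_erase (hS : IsSepSet G S X Y)
    (hw : ¬ IsSepSet G (S.erase w) X Y) : ∃ y ∈ Y, ReachAvoiding G (S.erase w) {w} y := by
  simp only [isSepSet_iff, not_forall, not_not, exists_prop] at hw
  obtain ⟨y, hy, hr⟩ := hw
  exact ⟨y, hy, hr.erase_split.resolve_left (hS.not_reach hy)⟩

theorem IsSepSet.mem_or_exists_adj_of_not_erase (hS : IsSepSet G S X Y)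
    (hw : ¬ IsSepSet G (S.erase w) X Y) :
    w ∈ X ∨ ∃ q, ReachAvoiding G S X q ∧ G.Adj q w := by
  by_contra! hcon
  refine hw (isSepSet_iff.mpr fun y hy hr => hS.not_reach hy ?_)
  clear hy
  induction hr with
  | @base x hx hxW =>
    exact .base hx fun h => hxW (mem_erase.mpr ⟨fun hxw => hcon.1 (hxw ▸ hx), h⟩)
  | @step y y' hr hadj hy ih =>
    exact ih.step hadj fun h => hy (mem_erase.mpr ⟨fun hyw => hcon.2 y ih (hyw ▸ hadj), h⟩)

theorem IsImpSep.not_isSepSet_erase (h : IsImpSep G X Y W) (hw : w ∈ W) :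
    ¬ IsSepSet G (W.erase w) X Y :=
  h.2.1 _ (erase_subset w W) (erase_ne_self.mpr hw)

theorem IsImpSep.eq_singleton_of_mem (h : IsImpSep G {v} Y W) (hv : v ∈ W) : W = {v} := by
  refine Finset.eq_singleton_iff_unique_mem.mpr ⟨hv, fun w hw => ?_⟩
  by_contra hwv
  exact h.not_isSepSet_erase hw (isSepSet_of_mem (mem_erase.mpr ⟨Ne.symm hwv, hv⟩))

theorem reachAvoiding_erase_iff (hv : v ∈ W) :
    ReachAvoiding G W (X.erase v) z ↔ ReachAvoiding G W X z := by
  refine ⟨.mono (erase_subset v X), .trans_of_forall fun x hx hxW => ?_⟩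
  exact .base (mem_erase.mpr ⟨fun h => hxW (h ▸ hv), hx⟩) hxW

def IsMinSep (G : SimpleGraph V) (X Y F S : Finset V) : Prop :=
  IsSepSet G S X Y ∧ Disjoint S F ∧
    ∀ T, IsSepSet G T X Y → Disjoint T F → S.card ≤ T.card

theorem IsMinSep.not_isSepSet_erase (hS : IsMinSep G X Y F S) (hv : v ∈ S) :
    ¬ IsSepSet G (S.erase v) X Y := fun h =>
  (card_erase_lt_of_mem hv).not_ge
    (hS.2.2 _ h (hS.2.1.mono_left (erase_subset v S)))

end MinimalSeparators

section ReachFinset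

open scoped Classical

variable {V : Type*} [Fintype V] {G : SimpleGraph V} {S T W X Y : Finset V} {k : ℕ} {z : V}

noncomputable def reachFinset (G : SimpleGraph V) (W X : Finset V) : Finset V :=
  Finset.univ.filter (ReachAvoiding G W X)

@[simp]
theorem mem_reachFinset : z ∈ reachFinset G W X ↔ ReachAvoiding G W X z := by
  simp [reachFinset]

theorem coe_reachFinset : (↑(reachFinset G W X) : Set V) = ReachSet G W X := by
  ext; simp [reachAvoiding_iff_mem_reachSet]

theorem IsSepSet.disjoint_reachFinset (h : IsSepSet G W X Y) : Disjoint (reachFinset G W X) Y :=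
  disjoint_right.mpr fun _ hy hr => h.not_reach hy (mem_reachFinset.mp hr)

theorem IsSepSet.exists_isImpSep (hT : IsSepSet G T X Y) :
    ∃ W, IsImpSep G X Y W ∧ W.card ≤ T.card ∧
      ∀ z, ReachAvoiding G T X z → ReachAvoiding G W X z := by
  set C := Finset.univ.filter fun W => IsSepSet G W X Y ∧ W.card ≤ T.card ∧
    ∀ z, ReachAvoiding G T X z → ReachAvoiding G W X z
  obtain ⟨W₁, hW₁, hmax⟩ := C.exists_max_image (fun W => (reachFinset G W X).card)
    ⟨T, by simp [C, hT]⟩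
  simp only [C, mem_filter, mem_univ, true_and, and_imp] at hW₁ hmax
  obtain ⟨W, hWW₁, hW, hWmin⟩ := hW₁.1.exists_minimal_subset
  have hW₁W : reachFinset G W₁ X ⊆ reachFinset G W X :=
    fun z hz => mem_reachFinset.mpr ((mem_reachFinset.mp hz).anti hWW₁)
  have hcard : W.card ≤ T.card := (card_le_card hWW₁).trans hW₁.2.1
  refine ⟨W, ⟨hW, hWmin, fun T' hT' hcard' hss => ?_⟩, hcard,
    fun z hz => (hW₁.2.2 z hz).anti hWW₁⟩
  rw [← coe_reachFinset, ← coe_reachFinset, coe_ssubset] at hss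
  have hreach := reachSet_subset_reachSet_iff.mp (coe_reachFinset (G := G) ▸
    coe_reachFinset (G := G) ▸ coe_subset.mpr hss.1)
  exact (card_lt_card hss).not_ge ((hmax T' hT' (hcard'.trans hcard)
    fun z hz => hreach z ((hW₁.2.2 z hz).anti hWW₁)).trans (card_le_card hW₁W))

theorem IsKImpSep.reach_subset_of_card_le (hS : IsKImpSep G k X Y S) (hT : IsSepSet G T X Y)
    (hk : T.card ≤ k) (hST : ∀ z, ReachAvoiding G S X z → ReachAvoiding G T X z) :
    ∀ z, ReachAvoiding G T X z → ReachAvoiding G S X z := by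
  obtain ⟨W, hW, hWT, hTW⟩ := hT.exists_isImpSep
  obtain rfl : W = S := by
    by_contra hne
    exact hS.2.2 W hW (hWT.trans hk) hne
      (reachSet_subset_reachSet_iff.mpr fun z hz => hTW z (hST z hz))
  exact hTW

end ReachFinset

section Cuts

open scoped Classical

variable {G : SimpleGraph V} {A B F S T W X X' Y : Finset V} {q z : V}

noncomputable def sourceCut (G : SimpleGraph V) (X B : Finset V) : Finset V :=
  Finset.univ.filter (· ∈ nbhdSet G ↑B) ∪ (X \ B)

theorem mem_sourceCut :
    q ∈ sourceCut G X B ↔ q ∉ B ∧ ((∃ b ∈ B, G.Adj q b) ∨ q ∈ X) := by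
  simp only [sourceCut, nbhdSet, mem_union, mem_filter, mem_univ,
    true_and, Set.mem_ofPred_eq, mem_coe, mem_sdiff]
  grind

theorem notMem_sourceCut (hq : q ∈ B) : q ∉ sourceCut G X B :=
  fun h => (mem_sourceCut.mp h).1 hq

theorem ReachAvoiding.mem_of_sourceCut (h : ReachAvoiding G (sourceCut G X B) X z) : z ∈ B := by
  induction h with
  | base hx hxW => exact not_not.mp fun h => hxW (mem_sourceCut.mpr ⟨h, .inr hx⟩)
  | step _ hadj hy ih =>
    exact not_not.mp fun h => hy (mem_sourceCut.mpr ⟨h, .inl ⟨_, ih, hadj.symm⟩⟩)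

theorem isSepSet_sourceCut (hB : Disjoint B Y) : IsSepSet G (sourceCut G X B) X Y :=
  isSepSet_iff.mpr fun _ hy hr => disjoint_right.mp hB hy hr.mem_of_sourceCut

theorem ReachAvoiding.sourceCut (hB : ∀ z, ReachAvoiding G W X z → z ∈ B)
    (h : ReachAvoiding G W X z) : ReachAvoiding G (sourceCut G X B) X z :=
  h.avoid_of_forall fun _ hz => notMem_sourceCut (hB _ hz)

theorem sourceCut_reachFinset_subset (hX : X ⊆ X') :
    sourceCut G X (reachFinset G T X') ⊆ T := by
  intro q hq
  obtain ⟨hqB, hq⟩ := mem_sourceCut.mp hq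
  by_contra hqT
  rcases hq with ⟨b, hb, hadj⟩ | hqX
  · exact hqB (mem_reachFinset.mpr ((mem_reachFinset.mp hb).step hadj.symm hqT))
  · exact hqB (mem_reachFinset.mpr (.base (hX hqX) hqT))

theorem sourceCut_union_subset :
    sourceCut G X (A ∪ B) ⊆ sourceCut G X A ∪ sourceCut G X B := by
  intro q
  simp only [mem_sourceCut, mem_union]
  grind

theorem sourceCut_inter_subset :
    sourceCut G X (A ∩ B) ⊆ sourceCut G X A ∪ sourceCut G X B := by
  intro q
  simp only [mem_sourceCut, mem_union, mem_inter]
  grind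

theorem card_sourceCut_union_add_card_sourceCut_inter_le :
    (sourceCut G X (A ∪ B)).card + (sourceCut G X (A ∩ B)).card ≤
      (sourceCut G X A).card + (sourceCut G X B).card := by
  have hinter : sourceCut G X (A ∪ B) ∩ sourceCut G X (A ∩ B) ⊆
      sourceCut G X A ∩ sourceCut G X B := by
    intro q
    simp only [mem_sourceCut, mem_union, mem_inter]
    grind
  rw [← card_union_add_card_inter, ← card_union_add_card_inter (sourceCut G X A)]
  exact add_le_add (card_le_card (union_subset sourceCut_union_subset
    sourceCut_inter_subset)) (card_le_card hinter)

end Cuts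

section InducedReach

variable {G : SimpleGraph V} {s T W X Y : Finset V} {v z : V}

theorem reachAvoiding_inducedOn_iff (hX : X ⊆ s) :
    ReachAvoiding (inducedOn G s) T X z ↔ ReachAvoiding G (T ∪ sᶜ) X z := by
  constructor <;> intro h
  · induction h with
    | base hx hxT => exact .base hx (by simp [hX hx, hxT])
    | step _ hadj hy ih =>
      exact ih.step (inducedOn_adj.mp hadj).1 (by simp [hy, (inducedOn_adj.mp hadj).2.2])
  · induction h with
    | base hx hxT => exact .base hx (by simp_all)
    | step h hadj hy ih =>
      simp only [mem_union, mem_compl, not_or, not_not] at hy h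
      exact ih.step (inducedOn_adj.mpr ⟨hadj, (by simpa using h.notMem : _ ∧ _).2, hy.2⟩) hy.1

theorem ReachAvoiding.mem_of_inducedOn (hX : X ⊆ s) (h : ReachAvoiding (inducedOn G s) T X z) :
    z ∈ s := by
  have := ((reachAvoiding_inducedOn_iff hX).mp h).notMem
  simp_all

theorem reachAvoiding_inducedOn_inter_iff (hX : X ⊆ s) :
    ReachAvoiding (inducedOn G s) (T ∩ s) X z ↔ ReachAvoiding (inducedOn G s) T X z := by
  have : T ∩ s ∪ sᶜ = T ∪ sᶜ := by ext; simp; tauto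
  rw [reachAvoiding_inducedOn_iff hX, reachAvoiding_inducedOn_iff hX, this]

theorem reachAvoiding_delete_iff :
    ReachAvoiding (inducedOn G {v}ᶜ) T (X.erase v) z ↔ ReachAvoiding G (insert v T) X z := by
  rw [reachAvoiding_inducedOn_iff (fun x hx => by simpa using (mem_erase.mp hx).1),
    compl_compl, union_singleton, reachAvoiding_erase_iff (mem_insert_self v T)]

theorem isSepSet_delete_iff :
    IsSepSet (inducedOn G {v}ᶜ) T (X.erase v) (Y.erase v) ↔ IsSepSet G (insert v T) X Y := by
  simp only [isSepSet_iff, reachAvoiding_delete_iff, mem_erase]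
  refine ⟨fun h y hy hr => h y ⟨fun hyv => hr.notMem (hyv ▸ mem_insert_self v T), hy⟩ hr,
    fun h y hy => h y hy.2⟩

theorem IsImpSep.delete (h : IsImpSep G X Y W) (hv : v ∈ W) :
    IsImpSep (inducedOn G {v}ᶜ) (X.erase v) (Y.erase v) (W.erase v) := by
  have hreach : ∀ T, ReachSet (inducedOn G {v}ᶜ) T (X.erase v) = ReachSet G (insert v T) X :=
    fun T => by simp only [reachSet_eq, reachAvoiding_delete_iff]
  have hW : insert v (W.erase v) = W := insert_erase hv
  refine ⟨by rw [isSepSet_delete_iff, hW]; exact h.1, fun W₂ hsub hne hsep => ?_,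
    fun T hT hcard hss => ?_⟩
  · have hvW₂ : v ∉ W₂ := fun h => notMem_erase v W (hsub h)
    refine h.2.1 (insert v W₂) (insert_subset hv (hsub.trans (erase_subset v W)))
      (fun heq => hne ?_) (isSepSet_delete_iff.mp hsep)
    rw [← heq, erase_insert hvW₂]
  · rw [hreach, hreach, hW] at hss
    refine h.2.2 _ (isSepSet_delete_iff.mp hT) ?_ hss
    have := card_insert_le v T
    have := card_erase_add_one hv
    omega

end InducedReach

section ImportantSeparators

open scoped Classical

variable {H : SimpleGraph V} {B F S T W X Y : Finset V} {v : V}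

def IsFurthestMinSep (H : SimpleGraph V) (X Y F S : Finset V) : Prop :=
  IsMinSep H X Y F S ∧
    ∀ T, IsMinSep H X Y F T → (reachFinset H T X).card ≤ (reachFinset H S X).card

theorem exists_isFurthestMinSep (h : ∃ T, IsSepSet H T X Y ∧ Disjoint T F) :
    ∃ S, IsFurthestMinSep H X Y F S := by
  set seps := Finset.univ.filter fun T => IsSepSet H T X Y ∧ Disjoint T F
  obtain ⟨T₀, hT₀, hmin⟩ := seps.exists_min_image Finset.card
    (h.imp fun T hT => by simpa [seps] using hT)
  obtain ⟨S, hS, hmax⟩ := (seps.filter (·.card = T₀.card)).exists_max_image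
    (fun T => (reachFinset H T X).card) ⟨T₀, by simp [hT₀]⟩
  simp only [seps, mem_filter, mem_univ, true_and, and_imp] at hT₀ hS hmin hmax
  have hSmin : IsMinSep H X Y F S := ⟨hS.1.1, hS.1.2, fun T h1 h2 => hS.2 ▸ hmin T h1 h2⟩
  exact ⟨S, hSmin, fun T hT => hmax T hT.1 hT.2.1
    (le_antisymm (hS.2 ▸ hT.2.2 S hSmin.1 hSmin.2.1) (hmin T hT.1 hT.2.1))⟩

/-- Uncrossing, by submodularity of `sourceCut` and minimality of `S`. -/
theorem IsMinSep.card_sourceCut_union_le (hS : IsMinSep H X Y F S)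
    (hBF : Disjoint (sourceCut H X B) F) :
    (sourceCut H X (reachFinset H S X ∪ B)).card ≤ (sourceCut H X B).card := by
  set A := reachFinset H S X
  have hAS : sourceCut H X A ⊆ S := sourceCut_reachFinset_subset subset_rfl
  have hinter : S.card ≤ (sourceCut H X (A ∩ B)).card :=
    hS.2.2 _ (isSepSet_sourceCut (hS.1.disjoint_reachFinset.mono_left inter_subset_left))
      ((disjoint_union_left.mpr ⟨hS.2.1.mono_left hAS, hBF⟩).mono_left
        sourceCut_inter_subset)
  have := card_sourceCut_union_add_card_sourceCut_inter_le (G := H) (X := X) (A := A) (B := B)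
  have := card_le_card hAS
  omega

theorem IsMinSep.disjoint_sourceCut_union (hS : IsMinSep H X Y F S)
    (hBF : Disjoint (sourceCut H X B) F) :
    Disjoint (sourceCut H X (reachFinset H S X ∪ B)) F :=
  (disjoint_union_left.mpr ⟨hS.2.1.mono_left (sourceCut_reachFinset_subset subset_rfl),
    hBF⟩).mono_left sourceCut_union_subset

theorem IsImpSep.reach_of_isMinSep (hW : IsImpSep H X Y W) (hWF : Disjoint W F)
    (hS : IsMinSep H X Y F S) :
    ∀ z, ReachAvoiding H S X z → ReachAvoiding H W X z := by
  have hBW : sourceCut H X (reachFinset H W X) ⊆ W := sourceCut_reachFinset_subset subset_rfl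
  have hU := hW.reach_subset_of_card_le
    (isSepSet_sourceCut (disjoint_union_left.mpr
      ⟨hS.1.disjoint_reachFinset, hW.1.disjoint_reachFinset⟩))
    ((hS.card_sourceCut_union_le (hWF.mono_left hBW)).trans
      (card_le_card hBW))
    fun z hz => hz.sourceCut fun w hw => mem_union_right _ (mem_reachFinset.mpr hw)
  exact fun z hz => hU z (hz.sourceCut fun w hw => mem_union_left _ (mem_reachFinset.mpr hw))

theorem IsFurthestMinSep.card_lt (hS : IsFurthestMinSep H X Y F S) (hv : v ∈ S)
    (hT : IsSepSet H T (insert v X) Y) (hTF : Disjoint T (insert v F)) : S.card < T.card := by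
  by_contra! hTS
  set A := reachFinset H S X
  set B := reachFinset H T (insert v X)
  set U := sourceCut H X (A ∪ B)
  have hBT : sourceCut H X B ⊆ T := sourceCut_reachFinset_subset (subset_insert v X)
  have hBF : Disjoint (sourceCut H X B) F :=
    (hTF.mono_right (subset_insert v F)).mono_left hBT
  have hUcard : U.card ≤ S.card :=
    (hS.1.card_sourceCut_union_le hBF).trans
      ((card_le_card hBT).trans hTS)
  have hUmin : IsMinSep H X Y F U := ⟨isSepSet_sourceCut (disjoint_union_left.mpr
    ⟨hS.1.1.disjoint_reachFinset, hT.disjoint_reachFinset⟩), hS.1.disjoint_sourceCut_union hBF,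
    fun T' h1 h2 => hUcard.trans (hS.1.2.2 T' h1 h2)⟩
  have hvT : v ∉ T := disjoint_right.mp hTF (mem_insert_self v F)
  have hvU : v ∉ U := notMem_sourceCut (mem_union_right _
    (mem_reachFinset.mpr (.base (mem_insert_self v X) hvT)))
  have hAU : ∀ z, ReachAvoiding H S X z → ReachAvoiding H U X z :=
    fun z hz => hz.sourceCut fun w hw => mem_union_left _ (mem_reachFinset.mpr hw)
  have hvreach : ReachAvoiding H U X v := by
    rcases hS.1.1.mem_or_exists_adj_of_not_erase (hS.1.not_isSepSet_erase hv) with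
      hx | ⟨q, hq, hadj⟩
    exacts [.base hx hvU, (hAU q hq).step hadj hvU]
  have hsub : insert v A ⊆ reachFinset H U X := insert_subset
    (mem_reachFinset.mpr hvreach) fun w hw => mem_reachFinset.mpr (hAU w (mem_reachFinset.mp hw))
  have hcard := card_le_card hsub
  rw [card_insert_of_notMem fun h => (mem_reachFinset.mp h).notMem hv] at hcard
  have := hS.2 U hUmin
  omega

theorem IsImpSep.insert_source (hW : IsImpSep H X Y W) (hWF : Disjoint W F)
    (hS : IsMinSep H X Y F S) (hv : v ∈ S) (hvW : v ∉ W) : IsImpSep H (insert v X) Y W := by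
  have hSW := hW.reach_of_isMinSep hWF hS
  have hvreach : ReachAvoiding H W X v := by
    rcases hS.1.mem_or_exists_adj_of_not_erase (hS.not_isSepSet_erase hv) with
      hx | ⟨q, hq, hadj⟩
    exacts [.base hx hvW, (hSW q hq).step hadj hvW]
  have hinsert : ∀ z, ReachAvoiding H W (insert v X) z → ReachAvoiding H W X z :=
    fun z => .trans_of_forall fun x hx hxW => (mem_insert.mp hx).elim
      (fun h => h ▸ hvreach) (.base · hxW)
  refine ⟨isSepSet_iff.mpr fun y hy hr => hW.1.not_reach hy (hinsert y hr),
    fun W₂ hsub hne hsep => hW.2.1 W₂ hsub hne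
      (isSepSet_iff.mpr fun y hy hr => hsep.not_reach hy (hr.mono (subset_insert v X))),
    fun T hT hcard hss => ?_⟩
  set B := reachFinset H T (insert v X)
  have hBT : sourceCut H X B ⊆ T := sourceCut_reachFinset_subset (subset_insert v X)
  rw [Set.ssubset_def, reachSet_subset_reachSet_iff, reachSet_subset_reachSet_iff] at hss
  have hWB : ∀ z, ReachAvoiding H W X z → z ∈ B :=
    fun z hz => mem_reachFinset.mpr (hss.1 z (hz.mono (subset_insert v X)))
  have hBW := hW.reach_subset_of_card_le (isSepSet_sourceCut hT.disjoint_reachFinset)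
    ((card_le_card hBT).trans hcard) fun z hz => hz.sourceCut hWB
  refine hss.2 fun z hz => (hBW z ?_).mono (subset_insert v X)
  refine (hz.avoid_of_forall fun w hw => notMem_sourceCut (mem_reachFinset.mpr hw)).trans_of_forall
    fun x hx hxB => (mem_insert.mp hx).elim (fun h => h ▸ (hvreach.sourceCut hWB))
      (.base · hxB)

noncomputable def importantSeps (H : SimpleGraph V) (X Y F : Finset V) (s : ℕ) :
    Finset (Finset V) :=
  Finset.univ.filter fun W => IsImpSep H X Y W ∧ W.card ≤ s ∧ Disjoint W F

@[simp]
theorem mem_importantSeps {s : ℕ} :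
    W ∈ importantSeps H X Y F s ↔ IsImpSep H X Y W ∧ W.card ≤ s ∧ Disjoint W F := by
  simp [importantSeps]

theorem card_filter_mem_importantSeps_le {s : ℕ} :
    ((importantSeps H X Y F s).filter (v ∈ ·)).card ≤
      (importantSeps (inducedOn H {v}ᶜ) (X.erase v) (Y.erase v) F (s - 1)).card := by
  refine card_le_card_of_injOn (·.erase v) (fun W hW => ?_) fun W₁ hW₁ W₂ hW₂ heq => ?_
  · simp only [coe_filter, mem_importantSeps, Set.mem_ofPred_eq] at hW
    exact mem_importantSeps.mpr ⟨hW.1.1.delete hW.2,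
      Nat.le_sub_one_of_lt ((card_erase_lt_of_mem hW.2).trans_le hW.1.2.1),
      hW.1.2.2.mono_left (erase_subset v W)⟩
  · simp only [coe_filter, Set.mem_ofPred_eq] at hW₁ hW₂
    rw [← insert_erase hW₁.2, ← insert_erase hW₂.2]
    exact congrArg (insert v) heq

theorem filter_notMem_importantSeps_subset {s : ℕ} (hS : IsMinSep H X Y F S) (hv : v ∈ S) :
    (importantSeps H X Y F s).filter (v ∉ ·) ⊆
      importantSeps H (insert v X) Y (insert v F) s := by
  intro W hW
  simp only [mem_filter, mem_importantSeps] at hW ⊢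
  exact ⟨hW.1.1.insert_source hW.1.2.2 hS hv hW.2, hW.1.2.1,
    disjoint_insert_right.mpr ⟨hW.2, hW.1.2.2⟩⟩

/-- The branching bound behind the `4 ^ s` bound on important separators: `μ` measures
how far `2 s` exceeds the minimum size `lb` of an `F`-avoiding separator. -/
theorem card_importantSeps_le (μ s lb : ℕ)
    (hlb : ∀ T, IsSepSet H T X Y → Disjoint T F → lb ≤ T.card) (hμ : 2 * s ≤ μ + lb) :
    (importantSeps H X Y F s).card ≤ 2 ^ μ := by
  induction μ using Nat.strong_induction_on generalizing H X Y F s lb with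
  | _ μ ih =>
  by_cases hex : ∃ T, IsSepSet H T X Y ∧ Disjoint T F ∧ T.card ≤ s
  swap
  · rw [card_eq_zero.mpr (eq_empty_of_forall_notMem fun W hW =>
      hex ⟨W, (mem_importantSeps.mp hW).1.1, (mem_importantSeps.mp hW).2.2,
        (mem_importantSeps.mp hW).2.1⟩)]
    exact Nat.zero_le _
  obtain ⟨T, hT, hTF, hTs⟩ := hex
  obtain ⟨S, hS⟩ := exists_isFurthestMinSep ⟨T, hT, hTF⟩
  have hSs : S.card ≤ s := (hS.1.2.2 T hT hTF).trans hTs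
  have hlbS : lb ≤ S.card := hlb S hS.1.1 hS.1.2.1
  rcases S.eq_empty_or_nonempty with rfl | ⟨v, hv⟩
  · refine (card_le_one.mpr fun W₁ hW₁ W₂ hW₂ => ?_).trans (Nat.one_le_two_pow)
    have hempty : ∀ W ∈ importantSeps H X Y F s, W = ∅ := fun W hW => by_contra fun hne =>
      (mem_importantSeps.mp hW).1.2.1 ∅ (empty_subset W) (Ne.symm hne) hS.1.1
    rw [hempty W₁ hW₁, hempty W₂ hW₂]
  have hSpos : 0 < S.card := card_pos.mpr ⟨v, hv⟩
  have hvF : v ∉ F := disjoint_left.mp hS.1.2.1 hv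
  have hdel := ih (μ - 1) (by omega) (H := inducedOn H {v}ᶜ) (X := X.erase v)
    (Y := Y.erase v) (s - 1) (S.card - 1) (fun T hT hTF => by
      have := hS.1.2.2 _ (isSepSet_delete_iff.mp hT)
        (disjoint_insert_left.mpr ⟨hvF, hTF⟩)
      have := card_insert_le v T
      omega) (by omega)
  have hins := ih (μ - 1) (by omega) (X := insert v X) (F := insert v F) s (S.card + 1)
    (fun T hT hTF => hS.card_lt hv hT hTF) (by omega)
  have hpow : 2 ^ (μ - 1) + 2 ^ (μ - 1) = 2 ^ μ := by
    rw [← two_mul, ← pow_succ', Nat.sub_add_cancel (by omega)]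
  rw [← card_filter_add_card_filter_not (p := (v ∈ ·)), ← hpow]
  exact add_le_add (card_filter_mem_importantSeps_le.trans hdel)
    ((card_le_card (filter_notMem_importantSeps_subset hS.1 hv)).trans hins)

theorem card_importantSeps_empty_le (s : ℕ) : (importantSeps H X Y ∅ s).card ≤ 4 ^ s := by
  have := card_importantSeps_le (H := H) (X := X) (Y := Y) (F := ∅) (2 * s) s 0
    (fun _ _ _ => Nat.zero_le _) (by omega)
  rwa [pow_mul] at this

end ImportantSeparators

section Separations

variable {G : SimpleGraph V} {L R X Y W : Finset V} {y y' z : V}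

theorem IsSep.mem_or_mem (h : IsSep G L R) (z : V) : z ∈ L ∨ z ∈ R :=
  mem_union.mp (h.1 ▸ mem_univ z)

theorem IsSep.mem_left_of_adj (h : IsSep G L R) (hy : y ∉ R) (hadj : G.Adj y y') : y' ∈ L := by
  by_contra hy'
  exact h.2 y ((h.mem_or_mem y).resolve_right hy) hy y' ((h.mem_or_mem y').resolve_left hy') hy'
    hadj

theorem IsSep.mem_right_of_adj (h : IsSep G L R) (hy : y ∉ L) (hadj : G.Adj y y') : y' ∈ R := by
  by_contra hy'
  exact h.2 y' ((h.mem_or_mem y').resolve_right hy') hy' y ((h.mem_or_mem y).resolve_left hy) hy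
    hadj.symm

theorem IsSep.reach_mem_sdiff (h : IsSep G L R) (hX : X ⊆ L \ R) (hW : L ∩ R ⊆ W)
    (hz : ReachAvoiding G W X z) : z ∈ L \ R := by
  induction hz with
  | base hx _ => exact hX hx
  | step _ hadj hy ih =>
    have hL := h.mem_left_of_adj (mem_sdiff.mp ih).2 hadj
    exact mem_sdiff.mpr ⟨hL, fun hR => hy (hW (mem_inter.mpr ⟨hL, hR⟩))⟩

theorem IsSep.isSepSet_inter (h : IsSep G L R) (hX : X ⊆ L \ R) (hY : Y ⊆ R) :
    IsSepSet G (L ∩ R) X Y :=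
  isSepSet_iff.mpr fun _ hy hr =>
    (mem_sdiff.mp (h.reach_mem_sdiff hX subset_rfl hr)).2 (hY hy)

end Separations

section SepParts

open scoped Classical

variable {V : Type*} [DecidableEq V] {G : SimpleGraph V} {L R S T : Finset V} {v z : V}

-- The parts `ZX` and `ZY` of `L ∩ R` in the sketch above; `ZS` is `L ∩ R ∩ S`.
noncomputable def sepReached (G : SimpleGraph V) (L R S : Finset V) (v : V) : Finset V :=
  (L ∩ R).filter (ReachAvoiding G S {v})

noncomputable def sepUnreached (G : SimpleGraph V) (L R S : Finset V) (v : V) : Finset V :=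
  ((L ∩ R) \ sepReached G L R S v) \ (L ∩ R ∩ S)

abbrev leftGraph (G : SimpleGraph V) (L R S : Finset V) : SimpleGraph V :=
  inducedOn G (L \ (L ∩ R ∩ S))

theorem mem_sepReached :
    z ∈ sepReached G L R S v ↔ z ∈ L ∩ R ∧ ReachAvoiding G S {v} z := by
  simp [sepReached]

theorem mem_sepUnreached :
    z ∈ sepUnreached G L R S v ↔ z ∈ L ∩ R ∧ ¬ ReachAvoiding G S {v} z ∧ z ∉ S := by
  simp only [sepUnreached, mem_sdiff, mem_sepReached, mem_inter]
  tauto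

theorem sepReached_subset : sepReached G L R S v ⊆ L \ (L ∩ R ∩ S) := fun z hz => by
  obtain ⟨hz, hr⟩ := mem_sepReached.mp hz
  exact mem_sdiff.mpr ⟨(mem_inter.mp hz).1,
    fun h => hr.notMem (mem_inter.mp h).2⟩

theorem ReachAvoiding.of_leftGraph
    (hz : ReachAvoiding (leftGraph G L R S) (S ∩ (L \ R)) (sepReached G L R S v) z) :
    ReachAvoiding G S {v} z := by
  induction hz with
  | base hx _ => exact (mem_sepReached.mp hx).2
  | @step y y' _ hadj hy' ih =>
    obtain ⟨hadj, -, hdm⟩ := inducedOn_adj.mp hadj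
    obtain ⟨hL, hZS⟩ := mem_sdiff.mp hdm
    refine ih.step hadj fun hS => ?_
    by_cases hR : y' ∈ R
    · exact hZS (mem_inter.mpr ⟨mem_inter.mpr ⟨hL, hR⟩, hS⟩)
    · exact hy' (mem_inter.mpr ⟨hS, mem_sdiff.mpr ⟨hL, hR⟩⟩)

theorem isSepSet_leftGraph :
    IsSepSet (leftGraph G L R S) (S ∩ (L \ R)) (sepReached G L R S v)
      (sepUnreached G L R S v) :=
  isSepSet_iff.mpr fun _ hy hr => (mem_sepUnreached.mp hy).2.1 (hr.of_leftGraph)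

theorem reach_exchange_of_reach (hT : T ⊆ L \ (L ∩ R ∩ S))
    (hST : ∀ z, ReachAvoiding G S {v} z → z ∈ L →
      ReachAvoiding (leftGraph G L R S) T (sepReached G L R S v) z)
    (hz : ReachAvoiding G S {v} z) : ReachAvoiding G (S \ (L \ R) ∪ T) {v} z :=
  hz.avoid_of_forall fun w hw hwS => (mem_union.mp hwS).elim
    (fun h => hw.notMem (mem_sdiff.mp h).1)
    fun h => (hST w hw (mem_sdiff.mp (hT h)).1).notMem h

end SepParts

section ThroughLeft

open scoped Classical

variable {G : SimpleGraph V} {L R D S T W : Finset V} {k : ℕ} {u v z : V}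

theorem reach_exchange_of_reach_leftGraph (hT : T ⊆ L \ (L ∩ R ∩ S))
    (hST : ∀ z, ReachAvoiding G S {v} z → z ∈ L →
      ReachAvoiding (leftGraph G L R S) T (sepReached G L R S v) z)
    (hz : ReachAvoiding (leftGraph G L R S) T (sepReached G L R S v) z) :
    ReachAvoiding G (S \ (L \ R) ∪ T) {v} z := by
  have hsub : S \ (L \ R) ∪ T ⊆ T ∪ (L \ (L ∩ R ∩ S))ᶜ := by
    intro w hw
    simp only [mem_union, mem_sdiff, mem_inter, mem_compl] at hw ⊢
    tauto
  exact (((reachAvoiding_inducedOn_iff sepReached_subset).mp hz).anti hsub).trans_of_forall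
    fun x hx _ => reach_exchange_of_reach hT hST (mem_sepReached.mp hx).2

structure ImpSepThroughLeft (G : SimpleGraph V) (L R D S : Finset V) (u v : V) : Prop where
  isSep : IsSep G L R
  subset : D ⊆ R
  isImpSep : IsImpSep G {v} D S
  mem : u ∈ S
  mem_left : u ∈ L
  notMem_right : u ∉ R
  ne : v ≠ u

namespace ImpSepThroughLeft

theorem reach_source (h : ImpSepThroughLeft G L R D S u v) : ReachAvoiding G S {v} v :=
  .base (mem_singleton_self v) fun hv =>
    h.ne (mem_singleton.mp (h.isImpSep.eq_singleton_of_mem hv ▸ h.mem)).symm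

theorem mem_domain (h : ImpSepThroughLeft G L R D S u v) : u ∈ L \ (L ∩ R ∩ S) :=
  mem_sdiff.mpr ⟨h.mem_left, fun hu => h.notMem_right (mem_inter.mp (mem_inter.mp hu).1).2⟩

theorem exists_adj (h : ImpSepThroughLeft G L R D S u v) :
    ∃ q ∈ L, ReachAvoiding G S {v} q ∧ G.Adj q u := by
  rcases h.isImpSep.1.mem_or_exists_adj_of_not_erase (h.isImpSep.not_isSepSet_erase h.mem) with
    hu | ⟨q, hq, hadj⟩
  · exact absurd (mem_singleton.mp hu) h.ne.symm
  · exact ⟨q, h.isSep.mem_left_of_adj h.notMem_right hadj.symm, hq, hadj⟩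

theorem reach_or_mem_sdiff (h : ImpSepThroughLeft G L R D S u v)
    (hz : ReachAvoiding G (S \ (L \ R) ∪ sepUnreached G L R S v) {v} z) :
    ReachAvoiding G S {v} z ∨ z ∈ L \ R := by
  induction hz with
  | base hx _ => exact .inl (mem_singleton.mp hx ▸ h.reach_source)
  | @step y y' _ hadj hy' ih =>
    have hS : y' ∈ S → y' ∈ L \ R := fun hs =>
      not_not.mp fun h' => hy' (mem_union_left _ (mem_sdiff.mpr ⟨hs, h'⟩))
    rcases ih with hr | hy
    · by_cases hs : y' ∈ S
      exacts [.inr (hS hs), .inl (hr.step hadj hs)]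
    · have hL := h.isSep.mem_left_of_adj (mem_sdiff.mp hy).2 hadj
      by_cases hR : y' ∈ R
      · refine .inl (not_not.mp fun hr => hy' (mem_union_right _ ?_))
        exact mem_sepUnreached.mpr ⟨mem_inter.mpr ⟨hL, hR⟩, hr,
          fun hs => (mem_sdiff.mp (hS hs)).2 hR⟩
      · exact .inr (mem_sdiff.mpr ⟨hL, hR⟩)

/-- Exchanging `S ∩ (L \ R)` for `sepUnreached` gives a `{v}`-`D` separator whose reach also
contains `u`, so importance of `S` forces it to be larger. -/
theorem card_inter_sdiff_lt (h : ImpSepThroughLeft G L R D S u v) :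
    (S ∩ (L \ R)).card < (sepUnreached G L R S v).card := by
  set T := S \ (L \ R) ∪ sepUnreached G L R S v
  have hsep : IsSepSet G T {v} D := isSepSet_iff.mpr fun d hd hr =>
    (h.reach_or_mem_sdiff hr).elim (h.isImpSep.1.not_reach hd) fun hd' =>
      (mem_sdiff.mp hd').2 (h.subset hd)
  have hST : ∀ z, ReachAvoiding G S {v} z → ReachAvoiding G T {v} z :=
    fun z => .avoid_of_forall fun w hw hwT => (mem_union.mp hwT).elim
      (fun h' => hw.notMem (mem_sdiff.mp h').1) fun h' => (mem_sepUnreached.mp h').2.1 hw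
  obtain ⟨q, -, hq, hadj⟩ := h.exists_adj
  have hu : ReachAvoiding G T {v} u := (hST q hq).step hadj fun huT =>
    (mem_union.mp huT).elim
      (fun h' => (mem_sdiff.mp h').2 (mem_sdiff.mpr ⟨h.mem_left, h.notMem_right⟩))
      fun h' => h.notMem_right (mem_inter.mp (mem_sepUnreached.mp h').1).2
  have hcard : S.card < T.card := by
    by_contra! hle
    exact h.isImpSep.2.2 T hsep hle (Set.ssubset_def.mpr ⟨reachSet_subset_reachSet_iff.mpr hST,
      fun hsub => (reachSet_subset_reachSet_iff.mp hsub u hu).notMem h.mem⟩)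
  have : T.card ≤ (S \ (L \ R)).card + (sepUnreached G L R S v).card := card_union_le _ _
  have := card_sdiff_add_card_inter S (L \ R)
  omega

/-- Otherwise `L ∩ R` would be a `{v}`-`D` separator of size at most `k` reaching beyond `S`. -/
theorem sepReached_nonempty (h : ImpSepThroughLeft G L R D S u v) (hk : IsKImpSep G k {v} D S)
    (hZ : (L ∩ R).card ≤ k) : (sepReached G L R S v).Nonempty := by
  by_contra hempty
  have hSZ : ∀ z, ReachAvoiding G S {v} z → z ∉ L ∩ R :=
    fun z hz hzZ => hempty ⟨z, mem_sepReached.mpr ⟨hzZ, hz⟩⟩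
  obtain ⟨q, hqL, hq, hadj⟩ := h.exists_adj
  have hq' : q ∈ L \ R :=
    mem_sdiff.mpr ⟨hqL, fun hqR => hSZ q hq (mem_inter.mpr ⟨hqL, hqR⟩)⟩
  have hv : v ∈ L \ R := h.isSep.reach_mem_sdiff (singleton_subset_iff.mpr hq') subset_rfl
    (hq.symm.avoid_of_forall fun w hw => hSZ w (hq.trans hw))
  have hZS := hk.reach_subset_of_card_le
    (h.isSep.isSepSet_inter (singleton_subset_iff.mpr hv) h.subset) hZ
    fun z => .avoid_of_forall hSZ
  refine (hZS u ((hq.avoid_of_forall hSZ).step hadj fun hu => ?_)).notMem h.mem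
  exact h.notMem_right (mem_inter.mp hu).2

theorem reach_leftGraph (h : ImpSepThroughLeft G L R D S u v)
    (hne : (sepReached G L R S v).Nonempty) (hz : ReachAvoiding G S {v} z) (hzL : z ∈ L) :
    ReachAvoiding (leftGraph G L R S) (S ∩ (L \ R)) (sepReached G L R S v) z := by
  obtain ⟨x, hx⟩ := hne
  obtain ⟨-, hxr⟩ := mem_sepReached.mp hx
  suffices ∀ z, ReachAvoiding G S {x} z → z ∉ L ∨
      ReachAvoiding (leftGraph G L R S) (S ∩ (L \ R)) (sepReached G L R S v) z from
    (this z (hxr.symm.trans hz)).resolve_left (not_not.mpr hzL)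
  intro z hz
  induction hz with
  | base hx' hxS =>
    obtain rfl := mem_singleton.mp hx'
    exact .inr (.base hx fun h' => hxS (mem_inter.mp h').1)
  | @step y y' hy hadj hy'S ih =>
    by_cases hy'L : y' ∈ L
    swap
    · exact .inl hy'L
    have hSL : y' ∉ S ∩ (L \ R) := fun h' => hy'S (mem_inter.mp h').1
    refine .inr ?_
    rcases ih with hyL | ih
    · exact .base (mem_sepReached.mpr ⟨mem_inter.mpr
        ⟨hy'L, h.isSep.mem_right_of_adj hyL hadj⟩, hxr.trans (hy.step hadj hy'S)⟩) hSL
    · exact ih.step (inducedOn_adj.mpr ⟨hadj, ih.mem_of_inducedOn sepReached_subset,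
        mem_sdiff.mpr ⟨hy'L, fun h' => hy'S (mem_inter.mp h').2⟩⟩) hSL

theorem reach_or_reach_leftGraph_of_erase (h : ImpSepThroughLeft G L R D S u v)
    (hno : ∀ y ∈ sepUnreached G L R S v,
      ¬ ReachAvoiding (leftGraph G L R S) ((S ∩ (L \ R)).erase u) {u} y)
    (hz : ReachAvoiding G (S.erase u) {u} z) :
    ReachAvoiding G S {v} z ∨
      ReachAvoiding (leftGraph G L R S) ((S ∩ (L \ R)).erase u) {u} z := by
  induction hz with
  | base hx _ =>
    rw [mem_singleton.mp hx]
    exact .inr (.base (mem_singleton_self u) (notMem_erase u _))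
  | @step y y' _ hadj hy' ih =>
    have hS : y' ∈ S → y' = u :=
      fun hs => not_not.mp fun hne => hy' (mem_erase.mpr ⟨hne, hs⟩)
    have hSL : y' ∉ (S ∩ (L \ R)).erase u := fun h' =>
      hy' (erase_subset_erase u inter_subset_left h')
    rcases ih with hr | hr
    · by_cases hyu : y' = u
      · exact .inr (.base (hyu ▸ mem_singleton_self y') (hyu ▸ notMem_erase y' _))
      · exact .inl (hr.step hadj fun hs => hyu (hS hs))
    · have hydm := hr.mem_of_inducedOn (singleton_subset_iff.mpr h.mem_domain)
      obtain ⟨hyL, hyZS⟩ := mem_sdiff.mp hydm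
      by_cases hy'L : y' ∈ L
      · refine .inr (hr.step (inducedOn_adj.mpr
          ⟨hadj, hydm, mem_sdiff.mpr ⟨hy'L, fun h' => ?_⟩⟩) hSL)
        exact h.notMem_right (hS (mem_inter.mp h').2 ▸ (mem_inter.mp (mem_inter.mp h').1).2)
      · have hyZ := mem_inter.mpr ⟨hyL, h.isSep.mem_right_of_adj hy'L hadj.symm⟩
        have hry : ReachAvoiding G S {v} y := not_not.mp fun hr' => hno y
          (mem_sepUnreached.mpr ⟨hyZ, hr', fun hs => hyZS (mem_inter.mpr ⟨hyZ, hs⟩)⟩) hr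
        exact .inl (hry.step hadj fun hs => hy'L (hS hs ▸ h.mem_left))

theorem exists_reach_sepUnreached (h : ImpSepThroughLeft G L R D S u v) :
    ∃ y ∈ sepUnreached G L R S v,
      ReachAvoiding (leftGraph G L R S) ((S ∩ (L \ R)).erase u) {u} y := by
  by_contra! hno
  obtain ⟨d, hd, hr⟩ := h.isImpSep.1.exists_reach_of_not_erase
    (h.isImpSep.not_isSepSet_erase h.mem)
  rcases h.reach_or_reach_leftGraph_of_erase hno hr with hr | hr
  · exact h.isImpSep.1.not_reach hd hr
  · obtain ⟨hdL, hdZS⟩ :=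
      mem_sdiff.mp (hr.mem_of_inducedOn (singleton_subset_iff.mpr h.mem_domain))
    have hdZ := mem_inter.mpr ⟨hdL, h.subset hd⟩
    exact hno d (mem_sepUnreached.mpr ⟨hdZ, h.isImpSep.1.not_reach hd,
      fun hs => hdZS (mem_inter.mpr ⟨hdZ, hs⟩)⟩) hr

theorem not_isSepSet_erase (h : ImpSepThroughLeft G L R D S u v)
    (hne : (sepReached G L R S v).Nonempty) :
    ¬ IsSepSet (leftGraph G L R S) ((S ∩ (L \ R)).erase u) (sepReached G L R S v)
      (sepUnreached G L R S v) := by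
  intro hsep
  obtain ⟨q, hqL, hq, hadj⟩ := h.exists_adj
  obtain ⟨y, hy, hr⟩ := h.exists_reach_sepUnreached
  have hqr := (h.reach_leftGraph hne hq hqL).anti (erase_subset u _)
  exact hsep.not_reach hy ((hqr.step (inducedOn_adj.mpr
    ⟨hadj, hqr.mem_of_inducedOn sepReached_subset, h.mem_domain⟩) (notMem_erase u _)).trans hr)

theorem reach_or_reach_leftGraph_of_exchange (h : ImpSepThroughLeft G L R D S u v)
    (hT : IsSepSet (leftGraph G L R S) T (sepReached G L R S v) (sepUnreached G L R S v))
    (hST : ∀ z, ReachAvoiding G S {v} z → z ∈ L →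
      ReachAvoiding (leftGraph G L R S) T (sepReached G L R S v) z)
    (hz : ReachAvoiding G (S \ (L \ R) ∪ T) {v} z) :
    ReachAvoiding G S {v} z ∨ ReachAvoiding (leftGraph G L R S) T (sepReached G L R S v) z := by
  induction hz with
  | base hx _ => exact .inl (mem_singleton.mp hx ▸ h.reach_source)
  | @step y y' _ hadj hy' ih =>
    have hS : y' ∈ S → y' ∈ L \ R := fun hs =>
      not_not.mp fun h' => hy' (mem_union_left _ (mem_sdiff.mpr ⟨hs, h'⟩))
    have hT' : y' ∉ T := fun h' => hy' (mem_union_right _ h')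
    have hdm : y' ∈ L → y' ∈ L \ (L ∩ R ∩ S) := fun hy'L => mem_sdiff.mpr ⟨hy'L,
      fun h' => (mem_sdiff.mp (hS (mem_inter.mp h').2)).2 (mem_inter.mp (mem_inter.mp h').1).2⟩
    rcases ih with hr | hr
    · by_cases hs : y' ∈ S
      · have hyr := hST y hr (h.isSep.mem_left_of_adj (mem_sdiff.mp (hS hs)).2 hadj.symm)
        exact .inr (hyr.step (inducedOn_adj.mpr ⟨hadj, hyr.mem_of_inducedOn sepReached_subset,
          hdm (mem_sdiff.mp (hS hs)).1⟩) hT')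
      · exact .inl (hr.step hadj hs)
    · have hydm := hr.mem_of_inducedOn sepReached_subset
      by_cases hy'L : y' ∈ L
      · exact .inr (hr.step (inducedOn_adj.mpr ⟨hadj, hydm, hdm hy'L⟩) hT')
      · obtain ⟨hyL, hyZS⟩ := mem_sdiff.mp hydm
        have hyZ := mem_inter.mpr ⟨hyL, h.isSep.mem_right_of_adj hy'L hadj.symm⟩
        have hry : ReachAvoiding G S {v} y := not_not.mp fun hr' => hT.not_reach
          (mem_sepUnreached.mpr ⟨hyZ, hr', fun hs => hyZS (mem_inter.mpr ⟨hyZ, hs⟩)⟩) hr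
        exact .inl (hry.step hadj fun hs => hy'L (mem_sdiff.mp (hS hs)).1)

theorem isSepSet_exchange (h : ImpSepThroughLeft G L R D S u v)
    (hT : IsSepSet (leftGraph G L R S) T (sepReached G L R S v) (sepUnreached G L R S v))
    (hST : ∀ z, ReachAvoiding G S {v} z → z ∈ L →
      ReachAvoiding (leftGraph G L R S) T (sepReached G L R S v) z) :
    IsSepSet G (S \ (L \ R) ∪ T) {v} D := isSepSet_iff.mpr fun d hd hr => by
  rcases h.reach_or_reach_leftGraph_of_exchange hT hST hr with hr | hr
  · exact h.isImpSep.1.not_reach hd hr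
  · obtain ⟨hdL, hdZS⟩ := mem_sdiff.mp (hr.mem_of_inducedOn sepReached_subset)
    have hdZ := mem_inter.mpr ⟨hdL, h.subset hd⟩
    exact hT.not_reach (mem_sepUnreached.mpr ⟨hdZ, h.isImpSep.1.not_reach hd,
      fun hs => hdZS (mem_inter.mpr ⟨hdZ, hs⟩)⟩) hr

/-- Otherwise `S \ (L \ R) ∪ T` would be a `{v}`-`D` separator no larger than `S` with larger
reach. -/
theorem not_reachSet_ssubset (h : ImpSepThroughLeft G L R D S u v)
    (hne : (sepReached G L R S v).Nonempty) (hW : W ⊆ S ∩ (L \ R))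
    (hT : IsSepSet (leftGraph G L R S) T (sepReached G L R S v) (sepUnreached G L R S v))
    (hcard : T.card ≤ W.card) :
    ¬ ReachSet (leftGraph G L R S) W (sepReached G L R S v) ⊂
      ReachSet (leftGraph G L R S) T (sepReached G L R S v) := by
  intro hss
  set T₀ := T ∩ (L \ (L ∩ R ∩ S))
  have hT₀ : ∀ z, ReachAvoiding (leftGraph G L R S) T₀ (sepReached G L R S v) z ↔
      ReachAvoiding (leftGraph G L R S) T (sepReached G L R S v) z :=
    fun z => reachAvoiding_inducedOn_inter_iff sepReached_subset
  rw [Set.ssubset_def, reachSet_subset_reachSet_iff, reachSet_subset_reachSet_iff] at hss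
  push Not at hss
  obtain ⟨hWT, p, hpT, hpW⟩ := hss
  have hST₀ : ∀ z, ReachAvoiding G S {v} z → z ∈ L →
      ReachAvoiding (leftGraph G L R S) T₀ (sepReached G L R S v) z :=
    fun z hz hzL => (hT₀ z).mpr (hWT z ((h.reach_leftGraph hne hz hzL).anti hW))
  have hT₀sep :
      IsSepSet (leftGraph G L R S) T₀ (sepReached G L R S v) (sepUnreached G L R S v) :=
    isSepSet_iff.mpr fun y hy hr => hT.not_reach hy ((hT₀ y).mp hr)
  have hpS : ¬ ReachAvoiding G S {v} p := fun hr => hpW ((h.reach_leftGraph hne hr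
    (mem_sdiff.mp (hpT.mem_of_inducedOn sepReached_subset)).1).anti hW)
  have hcard' : (S \ (L \ R) ∪ T₀).card ≤ S.card := by
    have : (S \ (L \ R) ∪ T₀).card ≤ (S \ (L \ R)).card + T₀.card := card_union_le _ _
    have : T₀.card ≤ T.card := card_le_card inter_subset_left
    have := card_le_card hW
    have := card_sdiff_add_card_inter S (L \ R)
    omega
  refine h.isImpSep.2.2 _ (h.isSepSet_exchange hT₀sep hST₀) hcard' (Set.ssubset_def.mpr
    ⟨reachSet_subset_reachSet_iff.mpr fun z => reach_exchange_of_reach inter_subset_right hST₀,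
      fun hsub => hpS (reachSet_subset_reachSet_iff.mp hsub p ?_)⟩)
  exact reach_exchange_of_reach_leftGraph inter_subset_right hST₀ ((hT₀ p).mpr hpT)

theorem exists_isImpSep_leftGraph (h : ImpSepThroughLeft G L R D S u v)
    (hk : IsKImpSep G k {v} D S) (hZ : (L ∩ R).card ≤ k) :
    ∃ W, IsImpSep (leftGraph G L R S) (sepReached G L R S v) (sepUnreached G L R S v) W ∧
      u ∈ W ∧ W.card < (sepUnreached G L R S v).card := by
  have hne := h.sepReached_nonempty hk hZ
  obtain ⟨W, hWS, hW, hWmin⟩ := (isSepSet_leftGraph (G := G) (L := L) (R := R) (S := S)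
    (v := v)).exists_minimal_subset
  refine ⟨W, ⟨hW, hWmin, fun T hT hcard => h.not_reachSet_ssubset hne hWS hT hcard⟩,
    not_not.mp fun hu => h.not_isSepSet_erase hne (hW.mono (subset_erase.mpr ⟨hWS, hu⟩)),
    (card_le_card hWS).trans_lt h.card_inter_sdiff_lt⟩

end ImpSepThroughLeft

end ThroughLeft

theorem card_sigma_powerset_sdiff {α : Type*} [DecidableEq α] (Z : Finset α) :
    (Z.powerset.sigma fun ZX => (Z \ ZX).powerset).card = 3 ^ Z.card := by
  have := sum_pow_mul_eq_add_pow (1 : ℕ) 2 Z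
  norm_num at this
  rw [card_sigma, ← this]
  refine sum_congr rfl fun t ht => ?_
  rw [card_powerset, card_sdiff_of_subset (mem_powerset.mp ht)]

section Assembly

open scoped Classical

variable {G : SimpleGraph V} {L R D : Finset V} {k : ℕ} {u : V}

-- Pairs `⟨ZX, ZS⟩` encode the partitions `ZX ⊔ ZS ⊔ ZY` of `L ∩ R`.
noncomputable def impSepUnion (G : SimpleGraph V) (L R : Finset V) : Finset V :=
  ((L ∩ R).powerset.sigma fun ZX => ((L ∩ R) \ ZX).powerset).biUnion fun t =>
    (importantSeps (inducedOn G (L \ t.2)) t.1 (((L ∩ R) \ t.1) \ t.2) ∅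
      ((L ∩ R).card - 1)).biUnion id

theorem card_impSepUnion_le : (impSepUnion G L R).card ≤
    3 ^ (L ∩ R).card * (4 ^ ((L ∩ R).card - 1) * ((L ∩ R).card - 1)) := by
  rw [← card_sigma_powerset_sdiff]
  refine card_biUnion_le_card_mul _ _ _ fun t _ => ?_
  refine (card_biUnion_le_card_mul _ _ _ fun W hW => (mem_importantSeps.mp hW).2.1).trans ?_
  exact Nat.mul_le_mul_right _ (card_importantSeps_empty_le _)

theorem mem_impSepUnion (hsep : IsSep G L R) (hD : D ⊆ R) (hord : (L ∩ R).card ≤ k)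
    (hu : u ∈ KImpExt G D k) (huL : u ∈ L) (huR : u ∉ R) : u ∈ impSepUnion G L R := by
  rcases hu with ⟨v, hvu, S, hS, huS⟩ | ⟨-, -, huniq⟩
  · have h : ImpSepThroughLeft G L R D S u v := ⟨hsep, hD, hS.1, huS, huL, huR, hvu⟩
    obtain ⟨W, hW, huW, hcard⟩ := h.exists_isImpSep_leftGraph hS hord
    have hZY : (sepUnreached G L R S v).card ≤ (L ∩ R).card :=
      card_le_card (sdiff_subset.trans sdiff_subset)
    simp only [impSepUnion, mem_biUnion, mem_sigma, mem_powerset, mem_importantSeps, id]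
    refine ⟨⟨sepReached G L R S v, L ∩ R ∩ S⟩, ⟨filter_subset _ _, fun z hz => ?_⟩,
      W, ⟨hW, by omega, disjoint_empty_right W⟩, huW⟩
    obtain ⟨hzZ, hzS⟩ := mem_inter.mp hz
    exact mem_sdiff.mpr ⟨hzZ, fun hr => (mem_sepReached.mp hr).2.notMem hzS⟩
  · have hu := huniq _ (hsep.isSepSet_inter (singleton_subset_iff.mpr (mem_sdiff.mpr
      ⟨huL, huR⟩)) hD) hord ▸ mem_singleton_self u
    exact (huR (mem_inter.mp hu).2).elim

end Assembly

theorem kImpExt_unbreakability_tied_general (G : SimpleGraph V) (D : Finset V) (k : ℕ)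
    (L R : Finset V) (hsep : IsSep G L R) (hord : (L ∩ R).card ≤ k)
    (hD : D ⊆ R) :
    ((↑L : Set V) ∩ KImpExt G D k).ncard ≤ (L ∩ R).card * (12 ^ (L ∩ R).card + 1) := by
  set i := (L ∩ R).card
  have hsub : (↑L : Set V) ∩ KImpExt G D k ⊆ ↑(L ∩ R ∪ impSepUnion G L R) := by
    rintro u ⟨huL, hu⟩
    by_cases huR : u ∈ R
    · exact mem_union_left _ (mem_inter.mpr ⟨huL, huR⟩)
    · exact mem_union_right _ (mem_impSepUnion hsep hD hord hu huL huR)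
  have hpow : 3 ^ i * (4 ^ (i - 1) * (i - 1)) ≤ i * 12 ^ i :=
    calc 3 ^ i * (4 ^ (i - 1) * (i - 1)) ≤ 3 ^ i * (4 ^ i * i) := by gcongr <;> omega
      _ = i * 12 ^ i := by rw [show (12 : ℕ) = 3 * 4 by norm_num, mul_pow]; ring
  calc ((↑L : Set V) ∩ KImpExt G D k).ncard ≤ (L ∩ R ∪ impSepUnion G L R).card :=
        (Set.ncard_le_ncard hsub (finite_toSet _)).trans_eq (Set.ncard_coe_finset _)
    _ ≤ i + 3 ^ i * (4 ^ (i - 1) * (i - 1)) :=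
        (card_union_le _ _).trans (Nat.add_le_add_left card_impSepUnion_le _)
    _ ≤ i * (12 ^ i + 1) := by rw [mul_add, mul_one]; omega

/-- the `k`-important separator extension `A` of `D` is
`(i·(12^i + 1))`-unbreakability-tied to `D`: every separation `(L,R)` of order `i ≤ k`
with `D ⊆ R` satisfies `|L ∩ A| ≤ i·(12^i + 1)`. -/
theorem kImpExt_unbreakability_tied (G : SimpleGraph V) (D : Finset V) (k : ℕ)
    (hk : 0 < k) (L R : Finset V) (hsep : IsSep G L R) (hord : (L ∩ R).card ≤ k)
    (hD : D ⊆ R) :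
    ((↑L : Set V) ∩ KImpExt G D k).ncard ≤ (L ∩ R).card * (12 ^ (L ∩ R).card + 1) :=
  kImpExt_unbreakability_tied_general G D k L R hsep hord hD
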